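/- Let Γ be a finite collection of at least two finite sets, all of cardinality α > 0, such that Γ−{S} is an hke collection for every S ∈ Γ. If there exists one partition {Γ₁,Γ₂} of Γ into two non-empty subcollections with |⋂Γ₁ − ⋃Γ₂| = |⋂Γ₂ − ⋃Γ₁|, then Γ is an hke collection. -/

import Mathlib

/-!
Write `e Γ = |⋃Γ| + |⋂Γ|` and, for a partition `{A, B}`, `defect A B = |⋂A − ⋃B| − |⋂B − ⋃A|`.
Adjoining a set `S` to `B` adds `defect {S} B` to `e B`, and moving `S` across the partition
gives `defect (A ∪ {S}) B + defect A (B ∪ {S}) = defect A B`. Hence, by induction on `A`, if `e`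
takes one value `c` on all non-empty proper subcollections of `Γ = A ∪ B`, the partitions of those
subcollections have zero defect and `defect A B = ±(e Γ − c)`. So one partition of `Γ` with zero
defect forces `e Γ = c`.
-/

open Finset

/-- Union of a finite collection of finite sets. -/
def collU {α : Type*} [DecidableEq α] (Γ : Finset (Finset α)) : Finset α :=
  Γ.sup id

/-- Intersection of a finite collection of finite sets
(equals the usual intersection when the collection is non-empty). -/
def collI {α : Type*} [DecidableEq α] (Γ : Finset (Finset α)) : Finset α :=
  (Γ.sup id).filter (fun x => ∀ S ∈ Γ, x ∈ S)

/-- `e Γ = |⋃Γ| + |⋂Γ|` as an integer. -/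
def collE {α : Type*} [DecidableEq α] (Γ : Finset (Finset α)) : ℤ :=
  (collU Γ).card + (collI Γ).card

/-- `F` is a hereditary König–Egerváry collection with common cardinality `a`. -/
def IsHKE {α : Type*} [DecidableEq α] (F : Finset (Finset α)) (a : ℕ) : Prop :=
  (∀ S ∈ F, S.card = a) ∧
  ∀ Γ ⊆ F, Γ.Nonempty → collE Γ = 2 * (a : ℤ)

section Defect

variable {α : Type*} [DecidableEq α]

def defect (A B : Finset (Finset α)) : ℤ :=
  ((collI A \ collU B).card : ℤ) - (collI B \ collU A).card

lemma mem_collI {Γ : Finset (Finset α)} (hΓ : Γ.Nonempty) {x : α} :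
    x ∈ collI Γ ↔ ∀ S ∈ Γ, x ∈ S := by
  obtain ⟨S, hS⟩ := hΓ
  simp only [collI, mem_filter, and_iff_right_iff_imp]
  exact fun hx => mem_sup.2 ⟨S, hS, hx S hS⟩

lemma collU_insert (S : Finset α) (Γ : Finset (Finset α)) :
    collU (insert S Γ) = S ∪ collU Γ := by
  simp [collU]

lemma collI_insert (S : Finset α) {Γ : Finset (Finset α)} (hΓ : Γ.Nonempty) :
    collI (insert S Γ) = S ∩ collI Γ := by
  ext x
  rw [mem_collI (insert_nonempty S Γ), mem_inter, mem_collI hΓ, forall_mem_insert]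

lemma collU_singleton (S : Finset α) : collU {S} = S := by
  simp [collU]

lemma collI_singleton (S : Finset α) : collI {S} = S := by
  ext x
  rw [mem_collI (singleton_nonempty S)]
  simp

lemma collE_insert (S : Finset α) {B : Finset (Finset α)} (hB : B.Nonempty) :
    collE (insert S B) = collE B + defect {S} B := by
  have hU := card_sdiff_add_card S (collU B)
  have hI := card_sdiff_add_card_inter (collI B) S
  rw [inter_comm] at hI
  simp only [collE, defect, collU_insert, collI_insert S hB, collU_singleton, collI_singleton]
  omega

lemma defect_insert_left_add_defect_insert_right (S : Finset α) {A B : Finset (Finset α)}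
    (hA : A.Nonempty) (hB : B.Nonempty) :
    defect (insert S A) B + defect A (insert S B) = defect A B := by
  have hX := card_inter_add_card_sdiff (collI A \ collU B) S
  have hY := card_inter_add_card_sdiff (collI B \ collU A) S
  have eX₁ : (S ∩ collI A) \ collU B = (collI A \ collU B) ∩ S := by grind
  have eX₂ : collI A \ (S ∪ collU B) = (collI A \ collU B) \ S := by grind
  have eY₁ : (S ∩ collI B) \ collU A = (collI B \ collU A) ∩ S := by grind
  have eY₂ : collI B \ (S ∪ collU A) = (collI B \ collU A) \ S := by grind
  simp only [defect, collI_insert S hA, collI_insert S hB, collU_insert, eX₁, eX₂, eY₁, eY₂]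
  omega

lemma defect_eq_collE_sub_or_eq_neg (c : ℤ) {A B : Finset (Finset α)} (hA : A.Nonempty)
    (hB : B.Nonempty) (hAB : Disjoint A B)
    (hproper : ∀ Γ ⊂ A ∪ B, Γ.Nonempty → collE Γ = c) :
    defect A B = collE (A ∪ B) - c ∨ defect A B = -(collE (A ∪ B) - c) := by
  induction A using Finset.induction_on generalizing B with
  | empty => exact absurd hA not_nonempty_empty
  | insert S A hS ih =>
    obtain ⟨hSB, hAB⟩ := disjoint_insert_left.1 hAB
    have hsplit : insert S A ∪ B = insert S (A ∪ B) := insert_union S A B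
    rcases A.eq_empty_or_nonempty with rfl | hA
    · have hB' : collE B = c := hproper B (by simpa [hsplit] using ssubset_insert hSB) hB
      left
      rw [insert_empty, singleton_union, collE_insert S hB, hB']
      ring
    · have hsub : A ∪ B ⊂ insert S A ∪ B := hsplit ▸ ssubset_insert (by simp [hS, hSB])
      have hrest : collE (A ∪ B) = c := hproper _ hsub (hA.mono subset_union_left)
      have hzero := ih hA hB hAB fun Γ hΓ => hproper Γ (hΓ.trans hsub)
      have hmove := ih hA (insert_nonempty S B) (disjoint_insert_right.2 ⟨hS, hAB⟩)
        (by rwa [union_insert, ← hsplit])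
      have hflip := defect_insert_left_add_defect_insert_right S hA hB
      rw [union_insert, ← hsplit] at hmove
      rw [hrest, sub_self, neg_zero, or_self] at hzero
      rcases hmove with h | h
      · right; linarith
      · left; linarith

end Defect

theorem stmt_17_general {α : Type*} [DecidableEq α] (Γ : Finset (Finset α)) (a : ℕ)
    (hsize : ∀ S ∈ Γ, S.card = a)
    (hhke : ∀ S ∈ Γ, IsHKE (Γ.erase S) a)
    (hpart : ∃ Γ₁ Γ₂ : Finset (Finset α),
      Γ₁ ∪ Γ₂ = Γ ∧ Disjoint Γ₁ Γ₂ ∧ Γ₁.Nonempty ∧ Γ₂.Nonempty ∧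
      (collI Γ₁ \ collU Γ₂).card = (collI Γ₂ \ collU Γ₁).card) :
    IsHKE Γ a := by
  obtain ⟨Γ₁, Γ₂, rfl, hdisj, h₁, h₂, hbalanced⟩ := hpart
  have hproper : ∀ Γ' ⊂ Γ₁ ∪ Γ₂, Γ'.Nonempty → collE Γ' = 2 * a := fun Γ' hΓ' hne => by
    obtain ⟨S, hS, hS'⟩ := exists_of_ssubset hΓ'
    exact (hhke S hS).2 Γ' (subset_erase.2 ⟨hΓ'.subset, hS'⟩) hne
  have hdefect : defect Γ₁ Γ₂ = 0 := by simp [defect, hbalanced]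
  have hfull : collE (Γ₁ ∪ Γ₂) = 2 * a := by
    rcases defect_eq_collE_sub_or_eq_neg _ h₁ h₂ hdisj hproper with h | h <;> linarith
  refine ⟨hsize, fun Γ' hΓ' hne => ?_⟩
  rcases hΓ'.eq_or_ssubset with rfl | hΓ'
  · exact hfull
  · exact hproper Γ' hΓ' hne

theorem stmt_17 {α : Type*} [DecidableEq α] (Γ : Finset (Finset α))
    (hcard : 2 ≤ Γ.card) (a : ℕ) (ha : 0 < a)
    (hsize : ∀ S ∈ Γ, S.card = a)
    (hhke : ∀ S ∈ Γ, IsHKE (Γ.erase S) a)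
    (hpart : ∃ Γ₁ Γ₂ : Finset (Finset α),
      Γ₁ ∪ Γ₂ = Γ ∧ Disjoint Γ₁ Γ₂ ∧ Γ₁.Nonempty ∧ Γ₂.Nonempty ∧
      (collI Γ₁ \ collU Γ₂).card = (collI Γ₂ \ collU Γ₁).card) :
    IsHKE Γ a :=
  stmt_17_general Γ a hsize hhke hpart
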